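/- Let g : [0,∞) → ℝ be (α,m)-convex with (α,m) ∈ (0,1]², let f : [0,∞) → ℝ be (g-(α,m))-convex dominated, and let 0 ≤ a < b with f, g integrable on [a,b]. Then |(1/2)·[f(a) + f(b) + mα f(a/m) + mα f(b/m)]/(α+1) − (1/(b-a)) ∫_a^b f(x) dx| ≤ (1/2)·[g(a) + g(b) + mα g(a/m) + mα g(b/m)]/(α+1) − (1/(b-a)) ∫_a^b g(x) dx. -/

import Mathlib

/-!
Writing `D_h(x, y, t) = t^α h(x) + m (1 - t^α) h(y) - h(t x + m (1 - t) y)` for the defect of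
`(α,m)`-convexity, domination says `|D_f| ≤ D_g` pointwise. Integrating
`D_h(a, b/m, t) + D_h(b, a/m, t)` over `t ∈ [0,1]` gives twice the quantity in the theorem,
because `∫₀¹ t^α = 1/(α+1)` and the substitution `u = t x + m (1 - t) y` sweeps out `[a,b]`
in both terms. Integrating the pointwise bound then yields the claim.
-/

open intervalIntegral Set
open MeasureTheory (volume)

/-- `h` is `(α,m)`-convex on `[0,∞)`. -/
def AMConvex (α m : ℝ) (h : ℝ → ℝ) : Prop :=
  ∀ x, 0 ≤ x → ∀ y, 0 ≤ y → ∀ t ∈ Set.Icc (0:ℝ) 1,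
    h (t * x + m * (1 - t) * y) ≤ t ^ α * h x + m * (1 - t ^ α) * h y

/-- `f` is `(g-(α,m))`-convex dominated on `[0,∞)`. -/
def AMDominated (α m : ℝ) (g f : ℝ → ℝ) : Prop :=
  ∀ x, 0 ≤ x → ∀ y, 0 ≤ y → ∀ t ∈ Set.Icc (0:ℝ) 1,
    |t ^ α * f x + m * (1 - t ^ α) * f y - f (t * x + m * (1 - t) * y)| ≤
      t ^ α * g x + m * (1 - t ^ α) * g y - g (t * x + m * (1 - t) * y)

noncomputable def amDefect (α m : ℝ) (h : ℝ → ℝ) (x y t : ℝ) : ℝ :=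
  t ^ α * h x + m * (1 - t ^ α) * h y - h (t * x + m * (1 - t) * y)

section

variable {α m x y t : ℝ} {f g h : ℝ → ℝ}

theorem AMDominated.abs_amDefect_le (hf : AMDominated α m g f) (hx : 0 ≤ x) (hy : 0 ≤ y)
    (ht : t ∈ Icc (0 : ℝ) 1) : |amDefect α m f x y t| ≤ amDefect α m g x y t :=
  hf x hx y hy t ht

theorem segment_eq_mul_add (m x y t : ℝ) : t * x + m * (1 - t) * y = (x - m * y) * t + m * y := by
  ring

theorem intervalIntegrable_comp_segment (hxy : x ≠ m * y)
    (hint : IntervalIntegrable h volume (m * y) x) :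
    IntervalIntegrable (fun t => h (t * x + m * (1 - t) * y)) volume 0 1 := by
  have hc : x - m * y ≠ 0 := sub_ne_zero.mpr hxy
  have := (hint.comp_add_right (m * y)).comp_mul_left (c := x - m * y)
  simpa only [segment_eq_mul_add, sub_self, zero_div, div_self hc] using this

theorem integral_comp_segment (hxy : x ≠ m * y) :
    ∫ t in (0 : ℝ)..1, h (t * x + m * (1 - t) * y) =
      (x - m * y)⁻¹ * ∫ u in m * y..x, h u := by
  simp only [segment_eq_mul_add, integral_comp_mul_add h (sub_ne_zero.mpr hxy), mul_zero,
    zero_add, mul_one, sub_add_cancel, smul_eq_mul]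

theorem integral_rpow_zero_one (hα : -1 < α) : ∫ t in (0 : ℝ)..1, t ^ α = 1 / (α + 1) := by
  rw [integral_rpow (Or.inl hα), Real.one_rpow, Real.zero_rpow (by linarith)]
  ring

theorem intervalIntegrable_rpow_chord (hα : -1 < α) (c d : ℝ) :
    IntervalIntegrable (fun t : ℝ => t ^ α * c + m * (1 - t ^ α) * d) volume 0 1 :=
  have hpow := intervalIntegrable_rpow' (a := 0) (b := 1) hα
  (hpow.mul_const c).add ((intervalIntegrable_const.sub hpow).const_mul m |>.mul_const d)

theorem integral_rpow_chord (hα : -1 < α) (c d : ℝ) :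
    ∫ t in (0 : ℝ)..1, t ^ α * c + m * (1 - t ^ α) * d = (c + m * α * d) / (α + 1) := by
  have hpow := intervalIntegrable_rpow' (a := 0) (b := 1) hα
  have hα1 : α + 1 ≠ 0 := by linarith
  rw [integral_add (hpow.mul_const c)
      ((intervalIntegrable_const.sub hpow).const_mul m |>.mul_const d),
    integral_mul_const, integral_mul_const, integral_const_mul,
    integral_sub intervalIntegrable_const hpow, integral_const, integral_rpow_zero_one hα]
  field_simp
  ring

theorem intervalIntegrable_amDefect (hα : -1 < α) (hxy : x ≠ m * y)
    (hint : IntervalIntegrable h volume (m * y) x) :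
    IntervalIntegrable (amDefect α m h x y) volume 0 1 :=
  (intervalIntegrable_rpow_chord hα _ _).sub (intervalIntegrable_comp_segment hxy hint)

theorem integral_amDefect (hα : -1 < α) (hxy : x ≠ m * y)
    (hint : IntervalIntegrable h volume (m * y) x) :
    ∫ t in (0 : ℝ)..1, amDefect α m h x y t =
      (h x + m * α * h y) / (α + 1) - (x - m * y)⁻¹ * ∫ u in m * y..x, h u := by
  rw [← integral_rpow_chord hα, ← integral_comp_segment hxy]
  exact integral_sub (intervalIntegrable_rpow_chord hα _ _)
    (intervalIntegrable_comp_segment hxy hint)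

variable {a b : ℝ}

theorem intervalIntegrable_amDefect_add_swap (hα : -1 < α) (hm : m ≠ 0) (hab : a ≠ b)
    (hint : IntervalIntegrable h volume a b) :
    IntervalIntegrable (fun t => amDefect α m h a (b / m) t + amDefect α m h b (a / m) t)
      volume 0 1 := by
  have hb : m * (b / m) = b := mul_div_cancel₀ b hm
  have ha : m * (a / m) = a := mul_div_cancel₀ a hm
  exact (intervalIntegrable_amDefect hα (by rwa [hb]) (by rw [hb]; exact hint.symm)).add
    (intervalIntegrable_amDefect hα (by rw [ha]; exact hab.symm) (by rwa [ha]))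

theorem integral_amDefect_add_swap (hα : -1 < α) (hm : m ≠ 0) (hab : a ≠ b)
    (hint : IntervalIntegrable h volume a b) :
    ∫ t in (0 : ℝ)..1, (amDefect α m h a (b / m) t + amDefect α m h b (a / m) t) =
      2 * ((1 / 2) * ((h a + h b + m * α * h (a / m) + m * α * h (b / m)) / (α + 1))
        - (1 / (b - a)) * ∫ x in a..b, h x) := by
  have hb : m * (b / m) = b := mul_div_cancel₀ b hm
  have ha : m * (a / m) = a := mul_div_cancel₀ a hm
  have hab' : a ≠ m * (b / m) := by rwa [hb]
  have hba' : b ≠ m * (a / m) := by rw [ha]; exact hab.symm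
  have hint₁ : IntervalIntegrable h volume (m * (b / m)) a := by rw [hb]; exact hint.symm
  have hint₂ : IntervalIntegrable h volume (m * (a / m)) b := by rwa [ha]
  rw [integral_add (intervalIntegrable_amDefect hα hab' hint₁)
      (intervalIntegrable_amDefect hα hba' hint₂),
    integral_amDefect hα hab' hint₁, integral_amDefect hα hba' hint₂, hb, ha,
    integral_symm b a]
  have : b - a ≠ 0 := sub_ne_zero.mpr hab.symm
  have : a - b ≠ 0 := sub_ne_zero.mpr hab
  field_simp
  ring

end

theorem dominated_hh_third_general (f g : ℝ → ℝ) (α m a b : ℝ)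
    (hα : α ∈ Set.Ioc (0:ℝ) 1) (hm : m ∈ Set.Ioc (0:ℝ) 1)
    (hf : AMDominated α m g f)
    (ha : 0 ≤ a) (hab : a < b)
    (hfint : IntervalIntegrable f MeasureTheory.volume a b)
    (hgint : IntervalIntegrable g MeasureTheory.volume a b) :
    |(1 / 2) * ((f a + f b + m * α * f (a / m) + m * α * f (b / m)) / (α + 1))
        - (1 / (b - a)) * ∫ x in a..b, f x| ≤
      (1 / 2) * ((g a + g b + m * α * g (a / m) + m * α * g (b / m)) / (α + 1))
        - (1 / (b - a)) * ∫ x in a..b, g x := by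
  have hα' : -1 < α := by linarith [hα.1]
  have hm0 : m ≠ 0 := hm.1.ne'
  have hba : a ≠ b := hab.ne
  have hpoint : ∀ t ∈ Icc (0 : ℝ) 1,
      |amDefect α m f a (b / m) t + amDefect α m f b (a / m) t| ≤
        amDefect α m g a (b / m) t + amDefect α m g b (a / m) t := fun t ht =>
    (abs_add_le _ _).trans <| add_le_add
      (hf.abs_amDefect_le ha (div_nonneg (ha.trans hab.le) hm.1.le) ht)
      (hf.abs_amDefect_le (ha.trans hab.le) (div_nonneg ha hm.1.le) ht)
  have key := (abs_integral_le_integral_abs zero_le_one).trans <| integral_mono_on zero_le_one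
    (intervalIntegrable_amDefect_add_swap hα' hm0 hba hfint).abs
    (intervalIntegrable_amDefect_add_swap hα' hm0 hba hgint) hpoint
  rw [integral_amDefect_add_swap hα' hm0 hba hfint, integral_amDefect_add_swap hα' hm0 hba hgint,
    abs_mul, abs_two] at key
  linarith

theorem dominated_hh_third (f g : ℝ → ℝ) (α m a b : ℝ)
    (hα : α ∈ Set.Ioc (0:ℝ) 1) (hm : m ∈ Set.Ioc (0:ℝ) 1)
    (hg : AMConvex α m g) (hf : AMDominated α m g f)
    (ha : 0 ≤ a) (hab : a < b)
    (hfint : IntervalIntegrable f MeasureTheory.volume a b)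
    (hgint : IntervalIntegrable g MeasureTheory.volume a b) :
    |(1 / 2) * ((f a + f b + m * α * f (a / m) + m * α * f (b / m)) / (α + 1))
        - (1 / (b - a)) * ∫ x in a..b, f x| ≤
      (1 / 2) * ((g a + g b + m * α * g (a / m) + m * α * g (b / m)) / (α + 1))
        - (1 / (b - a)) * ∫ x in a..b, g x :=
  dominated_hh_third_general f g α m a b hα hm hf ha hab hfint hgint
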